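/- arXiv:2605.15411 — 2 statements merged into one kernel-verified Lean document; each statement's English description precedes it below -/
import Mathlib

section
/- Suppose the noise density $f$ on $[-V,V]$ is continuously differentiable with $c_l \le f(z) \le c_u$ and $|f'(z)| \le M_f$, and the virtual valuation map $\phi(z) := z - g(z)/f(z)$ (where $g = 1 - F$ is the tail) satisfies $\phi'(z) \ge c_\phi > 0$ on $[-V,V]$. Fix $u$ with $u + \phi(z) = 0$ having a solution $z^\dagger = p^\dagger - u \in [-V,V]$ with $p^\dagger \in [0,p_{\max}]$. Then for every $p \in [0, p_{\max}]$, $$\frac{c_l c_\phi}{2}|p - p^\dagger|^2 \le r(u, p^\dagger) - r(u,p) \le \frac{c_u}{2}\Big(2 + \frac{M_f}{c_l^2}\Big)|p - p^\dagger|^2,$$ where $r(u,p) = p\,g(p-u)$. -/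
private lemma mono_aux {a b : ℝ} {f f' : ℝ → ℝ}
    (hd : ∀ x ∈ Set.Icc a b, HasDerivAt f (f' x) x)
    (hpos : ∀ x ∈ Set.Icc a b, 0 ≤ f' x) : MonotoneOn f (Set.Icc a b) := by
  apply monotoneOn_of_deriv_nonneg (convex_Icc a b)
    (fun x hx => (hd x hx).continuousAt.continuousWithinAt)
  · intro x hx
    rw [interior_Icc] at hx
    exact ((hd x (Set.Ioo_subset_Icc_self hx)).differentiableAt).differentiableWithinAt
  · intro x hx
    rw [interior_Icc] at hx
    rw [(hd x (Set.Ioo_subset_Icc_self hx)).deriv]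
    exact hpos x (Set.Ioo_subset_Icc_self hx)

/-- CDF-shape regularity implies quadratic revenue geometry around the
virtual-valuation stationary price. -/
theorem stmt3 (F f f' g φ φ' : ℝ → ℝ) (V pmax u pdag cl cu Mf cφ : ℝ)
    (hV : 0 < V) (hpmax : 0 < pmax)
    (hgdef : ∀ z, g z = 1 - F z)
    (hφdef : ∀ z, φ z = z - g z / f z)
    (hcl : 0 < cl) (hclcu : cl ≤ cu) (hcφ : 0 < cφ)
    (hF : ∀ z ∈ Set.Icc (-V) V, HasDerivAt F (f z) z)
    (hfbound : ∀ z ∈ Set.Icc (-V) V, cl ≤ f z ∧ f z ≤ cu)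
    (hf' : ∀ z ∈ Set.Icc (-V) V, HasDerivAt f (f' z) z)
    (hf'bound : ∀ z ∈ Set.Icc (-V) V, |f' z| ≤ Mf)
    (hg01 : ∀ z ∈ Set.Icc (-V) V, g z ∈ Set.Icc (0 : ℝ) 1)
    (hφ' : ∀ z ∈ Set.Icc (-V) V, HasDerivAt φ (φ' z) z)
    (hφ'pos : ∀ z ∈ Set.Icc (-V) V, cφ ≤ φ' z)
    (hdom : ∀ s ∈ Set.Icc 0 pmax, s - u ∈ Set.Icc (-V) V)
    (hpdag : pdag ∈ Set.Icc 0 pmax)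
    (hstat : φ (pdag - u) = -u) :
    ∀ p ∈ Set.Icc 0 pmax,
      cl * cφ / 2 * |p - pdag| ^ 2 ≤ pdag * g (pdag - u) - p * g (p - u) ∧
      pdag * g (pdag - u) - p * g (p - u) ≤
        cu / 2 * (2 + Mf / cl ^ 2) * |p - pdag| ^ 2 := by
  set C : ℝ := 2 + Mf / cl ^ 2 with hCdef
  have h0mem : (0 : ℝ) ∈ Set.Icc (-V) V := ⟨by linarith, by linarith⟩
  have hMf : 0 ≤ Mf := le_trans (abs_nonneg _) (hf'bound 0 h0mem)
  have hC2 : (2 : ℝ) ≤ C := le_add_of_nonneg_right (div_nonneg hMf (by positivity))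
  have hgf : g = fun z => 1 - F z := funext hgdef
  have hg' : ∀ z ∈ Set.Icc (-V) V, HasDerivAt g (-(f z)) z := by
    intro z hz; rw [hgf]; exact (hF z hz).const_sub 1
  have hfne : ∀ z ∈ Set.Icc (-V) V, f z ≠ 0 :=
    fun z hz => ne_of_gt (lt_of_lt_of_le hcl (hfbound z hz).1)
  -- the identity φ' = 2 + g f' / f²
  have hφ'eq : ∀ z ∈ Set.Icc (-V) V, φ' z = 2 + g z * f' z / (f z) ^ 2 := by
    intro z hz
    have hφf : φ = fun z => z - g z / f z := funext hφdef
    have hder : HasDerivAt (fun z => z - g z / f z)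
        (1 - ((-(f z)) * f z - g z * f' z) / (f z) ^ 2) z :=
      (hasDerivAt_id z).sub ((hg' z hz).div (hf' z hz) (hfne z hz))
    have hu := hφ' z hz
    rw [hφf] at hu
    have heq := hu.unique hder
    rw [heq]
    have hne := hfne z hz
    field_simp
    ring
  have hφ'ub : ∀ z ∈ Set.Icc (-V) V, φ' z ≤ C := by
    intro z hz
    rw [hφ'eq z hz, hCdef]
    have hgz := hg01 z hz
    have h1 : g z * f' z ≤ Mf := by
      calc g z * f' z ≤ |g z * f' z| := le_abs_self _
        _ = |g z| * |f' z| := abs_mul _ _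
        _ ≤ 1 * Mf := by
            apply mul_le_mul _ (hf'bound z hz) (abs_nonneg _) zero_le_one
            rw [abs_of_nonneg hgz.1]; exact hgz.2
        _ = Mf := one_mul _
    have h2 : cl ^ 2 ≤ (f z) ^ 2 := by
      apply pow_le_pow_left₀ hcl.le (hfbound z hz).1
    have := div_le_div₀ hMf h1 (by positivity) h2
    linarith
  -- bounds on h s := u + φ (s - u)
  have hsub : ∀ s : ℝ, HasDerivAt (fun s : ℝ => s - u) 1 s :=
    fun s => (hasDerivAt_id s).sub_const u
  have hh : ∀ s ∈ Set.Icc 0 pmax, HasDerivAt (fun s => u + φ (s - u)) (φ' (s - u)) s := by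
    intro s hs
    have := ((hφ' _ (hdom s hs)).comp s (hsub s)).const_add u
    simpa using this
  have hstat0 : u + φ (pdag - u) = 0 := by rw [hstat]; ring
  -- lower linear bound on h via monotonicity of h - cφ • id
  have monL : MonotoneOn (fun s => (u + φ (s - u)) - cφ * s) (Set.Icc 0 pmax) := by
    apply mono_aux (f' := fun s => φ' (s - u) - cφ)
    · intro s hs
      exact ((hh s hs).sub ((hasDerivAt_id' s).const_mul cφ)).congr_deriv (by ring)
    · intro s hs; have := hφ'pos _ (hdom s hs); linarith
  have monU : MonotoneOn (fun s => C * s - (u + φ (s - u))) (Set.Icc 0 pmax) := by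
    apply mono_aux (f' := fun s => C - φ' (s - u))
    · intro s hs
      exact (((hasDerivAt_id' s).const_mul C).sub (hh s hs)).congr_deriv (by ring)
    · intro s hs; have := hφ'ub _ (hdom s hs); linarith
  have hbndR : ∀ s ∈ Set.Icc 0 pmax, pdag ≤ s →
      cφ * (s - pdag) ≤ u + φ (s - u) ∧ u + φ (s - u) ≤ C * (s - pdag) := by
    intro s hs hps
    have h1 := monL ⟨hpdag.1, hpdag.2⟩ hs hps
    have h2 := monU ⟨hpdag.1, hpdag.2⟩ hs hps
    simp only [hstat0] at h1 h2
    constructor <;> nlinarith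
  have hbndL : ∀ s ∈ Set.Icc 0 pmax, s ≤ pdag →
      C * (s - pdag) ≤ u + φ (s - u) ∧ u + φ (s - u) ≤ cφ * (s - pdag) := by
    intro s hs hps
    have h1 := monL hs ⟨hpdag.1, hpdag.2⟩ hps
    have h2 := monU hs ⟨hpdag.1, hpdag.2⟩ hps
    simp only [hstat0] at h1 h2
    constructor <;> nlinarith
  -- revenue derivative
  have hr : ∀ s ∈ Set.Icc 0 pmax,
      HasDerivAt (fun s => s * g (s - u)) (-(f (s - u)) * (u + φ (s - u))) s := by
    intro s hs
    have hgd : HasDerivAt (fun s => g (s - u)) (-(f (s - u))) s := by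
      have := ((hg' _ (hdom s hs)).comp s (hsub s))
      exact this.congr_deriv (by ring)
    have := (hasDerivAt_id' s).mul hgd
    refine this.congr_deriv ?_
    have hz := hdom s hs
    have hne := hfne _ hz
    rw [hφdef]
    field_simp
    ring
  -- quadratic comparison functions
  have hABder : ∀ (K : ℝ), ∀ s ∈ Set.Icc 0 pmax,
      HasDerivAt (fun s => s * g (s - u) + K / 2 * (s - pdag) ^ 2)
        (-(f (s - u)) * (u + φ (s - u)) + K * (s - pdag)) s := by
    intro K s hs
    have hq : HasDerivAt (fun s : ℝ => K / 2 * (s - pdag) ^ 2)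
        (K / 2 * (2 * (s - pdag) ^ 1 * 1)) s :=
      (((hasDerivAt_id s).sub_const pdag).pow 2).const_mul (K / 2)
    have := (hr s hs).add hq
    refine this.congr_deriv ?_
    ring
  intro p hp
  have hzsub : ∀ s ∈ Set.Icc 0 pmax, s ∈ Set.Icc 0 pmax := fun s hs => hs
  have key : ∀ s ∈ Set.Icc 0 pmax,
      (s * g (s - u) + cl * cφ / 2 * (s - pdag) ^ 2 ≤ pdag * g (pdag - u)) ∧
      (pdag * g (pdag - u) ≤ s * g (s - u) + cu * C / 2 * (s - pdag) ^ 2) := by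
    intro s hs
    rcases le_total s pdag with hsp | hsp
    · -- on [0, pdag]: A monotone, B antitone
      have hsub1 : Set.Icc (0:ℝ) pdag ⊆ Set.Icc 0 pmax :=
        Set.Icc_subset_Icc le_rfl hpdag.2
      have monA : MonotoneOn (fun s => s * g (s - u) + cl * cφ / 2 * (s - pdag) ^ 2)
          (Set.Icc 0 pdag) := by
        apply mono_aux (f' := fun s => -(f (s - u)) * (u + φ (s - u)) + cl * cφ * (s - pdag))
        · exact fun x hx => hABder (cl * cφ) x (hsub1 hx)
        · intro x hx
          have hb := (hbndL x (hsub1 hx) hx.2).2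
          have hf1 := (hfbound _ (hdom x (hsub1 hx))).1
          nlinarith [mul_nonneg (sub_nonneg.2 hf1) (neg_nonneg.2 (le_trans hb (by nlinarith [hx.2] : cφ * (x - pdag) ≤ 0)))]
      have monB : MonotoneOn (fun s => -(s * g (s - u) + cu * C / 2 * (s - pdag) ^ 2))
          (Set.Icc 0 pdag) := by
        apply mono_aux (f' := fun s => -(-(f (s - u)) * (u + φ (s - u)) + cu * C * (s - pdag)))
        · exact fun x hx => (hABder (cu * C) x (hsub1 hx)).neg
        · intro x hx
          have hb := hbndL x (hsub1 hx) hx.2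
          have hf1 := (hfbound _ (hdom x (hsub1 hx))).1
          have hf2 := (hfbound _ (hdom x (hsub1 hx))).2
          have hx2 : x - pdag ≤ 0 := by linarith [hx.2]
          have hhneg : u + φ (x - u) ≤ 0 := le_trans hb.2 (by nlinarith)
          nlinarith [mul_nonneg (sub_nonneg.2 hf2) (neg_nonneg.2 hhneg), mul_le_mul_of_nonneg_left hb.1 ((hcl.trans_le hclcu).le)]
      have hsI : s ∈ Set.Icc 0 pdag := ⟨hs.1, hsp⟩
      have hdI : pdag ∈ Set.Icc 0 pdag := ⟨hpdag.1, le_rfl⟩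
      have h1 := monA hsI hdI hsp
      have h2 := monB hsI hdI hsp
      norm_num at h1 h2
      exact ⟨by linarith, by linarith⟩
    · have hsub1 : Set.Icc pdag pmax ⊆ Set.Icc 0 pmax :=
        Set.Icc_subset_Icc hpdag.1 le_rfl
      have monA : MonotoneOn (fun s => -(s * g (s - u) + cl * cφ / 2 * (s - pdag) ^ 2))
          (Set.Icc pdag pmax) := by
        apply mono_aux (f' := fun s => -(-(f (s - u)) * (u + φ (s - u)) + cl * cφ * (s - pdag)))
        · exact fun x hx => (hABder (cl * cφ) x (hsub1 hx)).neg
        · intro x hx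
          have hb := (hbndR x (hsub1 hx) hx.1).1
          have hf1 := (hfbound _ (hdom x (hsub1 hx))).1
          have hx2 : 0 ≤ x - pdag := by linarith [hx.1]
          have hhpos : 0 ≤ u + φ (x - u) := le_trans (by positivity) hb
          nlinarith [mul_nonneg (sub_nonneg.2 hf1) hhpos, mul_le_mul_of_nonneg_left hb hcl.le]
      have monB : MonotoneOn (fun s => s * g (s - u) + cu * C / 2 * (s - pdag) ^ 2)
          (Set.Icc pdag pmax) := by
        apply mono_aux (f' := fun s => -(f (s - u)) * (u + φ (s - u)) + cu * C * (s - pdag))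
        · exact fun x hx => hABder (cu * C) x (hsub1 hx)
        · intro x hx
          have hb := hbndR x (hsub1 hx) hx.1
          have hf2 := (hfbound _ (hdom x (hsub1 hx))).2
          have hf1 := (hfbound _ (hdom x (hsub1 hx))).1
          have hx2 : 0 ≤ x - pdag := by linarith [hx.1]
          have hhpos : 0 ≤ u + φ (x - u) := le_trans (by positivity) hb.1
          nlinarith [mul_nonneg (sub_nonneg.2 hf2) hhpos, mul_le_mul_of_nonneg_left hb.2 ((hcl.trans_le hclcu).le)]
      have hsI : s ∈ Set.Icc pdag pmax := ⟨hsp, hs.2⟩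
      have hdI : pdag ∈ Set.Icc pdag pmax := ⟨le_rfl, hpdag.2⟩
      have h1 := monA hdI hsI hsp
      have h2 := monB hdI hsI hsp
      norm_num at h1 h2
      exact ⟨by linarith, by linarith⟩
  have hk := key p hp
  have habs : |p - pdag| ^ 2 = (p - pdag) ^ 2 := sq_abs _
  rw [habs]
  constructor
  · linarith [hk.1]
  · have heq : cu / 2 * C * (p - pdag) ^ 2 = cu * C / 2 * (p - pdag) ^ 2 := by ring
    rw [heq]
    linarith [hk.2]
end

section
/- Suppose that for a fixed constant $c_1 > 0$ and constants $C_{\mathrm{dec}}, C_{\mathrm{kl}} > 0$, two error probabilities satisfy $E_1 \le e^{-c_1 N} + C_{\mathrm{dec}} \frac{R_1}{S}$ and $E_2 \le e^{-c_1 N} + C_{\mathrm{dec}}\frac{R_2}{S}$ for nonnegative $R_1, R_2, S, N$, and also $E_1 + E_2 \ge \frac{1}{2}e^{-D/2}$ where $D \le C_{\mathrm{kl}}\big(\frac{R_1 + R_2}{S} + 2\big)\Gamma$ for a constant $\Gamma > 0$. If $\Gamma$ is small enough that $C_{\mathrm{kl}}(\alpha_0 + 2)\Gamma \le \log 4$ with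 $\alpha_0 = \frac{1}{16 C_{\mathrm{dec}}}$, and $N$ is large enough that $2e^{-c_1 N} \le \frac{1}{16}$, then $R_1 + R_2 > \alpha_0 S$. -/
/-- abstract two-point contradiction from the lower bound proof: the
decoder error bounds and the Bretagnolle–Huber lower bound force the paired local
regrets to be large. -/
theorem stmt16 (c1 Cdec Ckl E1 E2 R1 R2 S N D Γ : ℝ)
    (hc1 : 0 < c1) (hCdec : 0 < Cdec) (hCkl : 0 < Ckl)
    (hR1 : 0 ≤ R1) (hR2 : 0 ≤ R2) (hS : 0 ≤ S) (hN : 0 ≤ N) (hΓ : 0 < Γ)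
    (hE1 : E1 ≤ Real.exp (-(c1 * N)) + Cdec * (R1 / S))
    (hE2 : E2 ≤ Real.exp (-(c1 * N)) + Cdec * (R2 / S))
    (hlow : 1 / 2 * Real.exp (-(D / 2)) ≤ E1 + E2)
    (hD : D ≤ Ckl * ((R1 + R2) / S + 2) * Γ)
    (hΓsmall : Ckl * (1 / (16 * Cdec) + 2) * Γ ≤ Real.log 4)
    (hNlarge : 2 * Real.exp (-(c1 * N)) ≤ 1 / 16) :
    R1 + R2 > (1 / (16 * Cdec)) * S := by
  by_contra h
  push_neg at h
  set α : ℝ := 1 / (16 * Cdec) with hα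
  have hα0 : 0 < α := by positivity
  -- (R1+R2)/S ≤ α
  have hratio : (R1 + R2) / S ≤ α := by
    rcases eq_or_lt_of_le hS with hS0 | hSpos
    · simp [← hS0]; positivity
    · rw [div_le_iff₀ hSpos]; linarith [h]
  -- D ≤ log 4
  have hDle : D ≤ Real.log 4 := by
    have h1 : Ckl * ((R1 + R2) / S + 2) * Γ ≤ Ckl * (α + 2) * Γ := by
      have := mul_le_mul_of_nonneg_left (add_le_add_left hratio 2) hCkl.le
      exact mul_le_mul_of_nonneg_right this hΓ.le
    linarith
  -- lower bound: E1+E2 ≥ 1/4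
  have hexp : Real.exp (-(D / 2)) ≥ 1 / 2 := by
    have h4 : Real.exp (Real.log 4 / 2) = 2 := by
      rw [show (Real.log 4 / 2) = Real.log 4 * (1/2) by ring,
        Real.exp_mul, Real.exp_log (by norm_num : (0:ℝ) < 4)]
      rw [show (4:ℝ) = 2 ^ 2 by norm_num, ← Real.rpow_natCast (2:ℝ) 2,
        ← Real.rpow_mul (by norm_num)]
      norm_num
    have := Real.exp_le_exp.mpr (by linarith : -(Real.log 4 / 2) ≤ -(D / 2))
    rw [Real.exp_neg, h4] at this
    linarith
  have hlow' : (1:ℝ)/4 ≤ E1 + E2 := by nlinarith [Real.exp_pos (-(D/2))]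
  -- upper bound: E1+E2 ≤ 1/8
  have hdiv : R1 / S + R2 / S = (R1 + R2) / S := (add_div R1 R2 S).symm
  have hup : E1 + E2 ≤ 1 / 8 := by
    have hCd : Cdec * (R1 / S) + Cdec * (R2 / S) ≤ Cdec * α := by
      have : Cdec * ((R1 + R2) / S) ≤ Cdec * α :=
        mul_le_mul_of_nonneg_left hratio hCdec.le
      nlinarith
    have hCα : Cdec * α = 1 / 16 := by
      field_simp [hα]; rw [hα]; field_simp
    linarith
  linarith
end
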